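/- arXiv:2309.02841 — 2 statements merged into one kernel-verified Lean document; each statement's English description precedes it below -/
import Mathlib

section
/- For all integers k ≥ 2 and n ≥ 2, there exists an adjacency-hopping de Bruijn sequence H(k,n) of length L = k·(k-1)^(n-1); that is, there exists a function s : ZMod (k·(k-1)^(n-1)) → Fin k such that s i ≠ s (i+1) for all i, and for every adjacency-hopping word w : Fin n → Fin k there exists exactly one i with s (i + j) = w j for all j : Fin n. -/
/-- A word `w` of length `m` over the alphabet `Fin k` is adjacency-hopping if
`w i ≠ w (i+1)` for all `i` with `i + 1 < m`. -/
def IsAdjHop (k m : ℕ) (w : Fin m → Fin k) : Prop :=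
  ∀ i : ℕ, (h : i + 1 < m) → w ⟨i, by omega⟩ ≠ w ⟨i + 1, h⟩

/-- `s : ZMod L → Fin k` is an adjacency-hopping de Bruijn sequence `H(k,n)` if all
neighboring codes differ and every adjacency-hopping word of length `n` occurs exactly
once as a (cyclic) subsequence. -/
def IsAHDB (k n L : ℕ) (s : ZMod L → Fin k) : Prop :=
  (∀ i, s i ≠ s (i + 1)) ∧
  ∀ w : Fin n → Fin k, IsAdjHop k n w →
    ∃! i : ZMod L, ∀ j : Fin n, s (i + (j : ℕ)) = w j

/-!
Adjacency-hopping words of length `n` are the edges of a directed graph on words of length `n - 1`,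
the edge `w` running from its first `n - 1` letters to its last `n - 1` letters. Every vertex has
as many incoming as outgoing edges (`k - 1` if it is itself adjacency-hopping, none otherwise), and
any two adjacency-hopping words are joined by a walk, so there is an Euler circuit through all
`k * (k - 1) ^ (n - 1)` edges. We encode it as a permutation `σ` of the edges with a single cycle
in which every `σ e` starts where `e` ends; the first letters of the edges along the circuit form
the sequence, and its window at position `i` is the `i`-th edge. Such a `σ` is found by taking any
permutation with the successor property and merging, by a transposition, two cycles that leave
a common vertex, as long as there is more than one.
-/

open Equiv Function Relation

namespace Equiv.Perm

variable {α : Type*} [Finite α] {σ : Perm α}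

theorem sameCycle_mul_swap_of_not_sameCycle [DecidableEq α] {a b x : α}
    (hab : ¬σ.SameCycle a b) (hx : σ.SameCycle a x) : (σ * swap a b).SameCycle b x := by
  set τ := σ * swap a b
  have base : τ.SameCycle b (σ a) := by
    rw [show σ a = τ b by simp [τ]]
    exact sameCycle_apply_right.2 SameCycle.rfl
  have orbit : ∀ j : ℕ, τ.SameCycle b ((σ ^ (j + 1)) a) := by
    intro j
    induction j with
    | zero => simpa using base
    | succ j ih =>
      rw [pow_succ', Perm.mul_apply]
      generalize hz : (σ ^ (j + 1)) a = z at ih ⊢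
      by_cases hza : z = a
      · rw [hza]; exact base
      have hzb : z ≠ b := fun h => hab ⟨(j + 1 : ℕ), by rw [zpow_natCast, hz, h]⟩
      rw [show σ z = τ z by simp [τ, swap_apply_of_ne_of_ne hza hzb]]
      exact sameCycle_apply_right.2 ih
  obtain ⟨i, hi, -, rfl⟩ := hx.exists_pow_eq''
  obtain ⟨j, rfl⟩ := Nat.exists_eq_add_of_lt hi
  simpa using orbit j

theorem exists_zmod_equiv_of_forall_sameCycle (hσ : ∀ x y, σ.SameCycle x y) (x₀ : α) :
    ∃ (L : ℕ) (f : ZMod L ≃ α), ∀ i, f (i + 1) = σ (f i) := by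
  set p := orderOf σ
  have : NeZero p := ⟨(orderOf_pos σ).ne'⟩
  let g : ZMod p → α := fun i => (σ ^ i.val) x₀
  have hg : ∀ a : ℕ, g a = (σ ^ a) x₀ := fun a => by
    simp only [g, ZMod.val_natCast, p, pow_mod_orderOf]
  have hinj : Injective g := by
    intro i j hij
    have hpow : σ ^ i.val = σ ^ j.val := by
      ext y
      obtain ⟨t, rfl⟩ := (hσ x₀ y).exists_nat_pow_eq
      rw [← Perm.mul_apply, pow_mul_comm, Perm.mul_apply, ← Perm.mul_apply (σ ^ j.val),
        pow_mul_comm, Perm.mul_apply]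
      exact congrArg (σ ^ t) hij
    exact ZMod.val_injective _ (pow_injOn_Iio_orderOf (ZMod.val_lt i) (ZMod.val_lt j) hpow)
  have hsurj : Surjective g := fun y => by
    obtain ⟨t, -, rfl⟩ := (hσ x₀ y).exists_pow_eq'
    exact ⟨t, hg t⟩
  refine ⟨p, Equiv.ofBijective g ⟨hinj, hsurj⟩, fun i => ?_⟩
  obtain ⟨a, rfl⟩ : ∃ a : ℕ, (a : ZMod p) = i := ⟨i.val, ZMod.natCast_zmod_val i⟩
  show g _ = σ (g _)
  rw [← Nat.cast_succ, hg, hg, pow_succ', Perm.mul_apply]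

end Equiv.Perm

section Euler

open Perm

variable {E V : Type*} {src tgt : E → V}

variable (src tgt) in
def HasEdge (u v : V) : Prop := ∃ e, src e = u ∧ tgt e = v

theorem exists_perm_src_apply_eq_tgt [Finite E]
    (hbal : ∀ v, Nat.card {e // src e = v} = Nat.card {e // tgt e = v}) :
    ∃ σ : Perm E, ∀ e, src (σ e) = tgt e := by
  have φ : ∀ v, {e // tgt e = v} ≃ {e // src e = v} := fun v =>
    (Finite.card_eq.1 (hbal v).symm).some
  exact ⟨(sigmaFiberEquiv tgt).symm.trans ((sigmaCongrRight φ).trans (sigmaFiberEquiv src)),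
    fun e => (φ (tgt e) ⟨e, rfl⟩).2⟩

theorem src_mul_swap_apply [DecidableEq E] {σ : Perm E} (hσ : ∀ e, src (σ e) = tgt e)
    {a b : E} (hab : tgt a = tgt b) (e : E) : src ((σ * swap a b) e) = tgt e := by
  rcases eq_or_ne e a with rfl | hea
  · simp [hσ, hab]
  rcases eq_or_ne e b with rfl | heb
  · simp [hσ, hab]
  simp [swap_apply_of_ne_of_ne hea heb, hσ]

theorem exists_sameCycle_src_eq_of_not_sameCycle {σ : Perm E} (hσ : ∀ e, src (σ e) = tgt e)
    (hconn : ∀ e e', ReflTransGen (HasEdge src tgt) (tgt e) (src e'))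
    {e₀ y : E} (hy : ¬σ.SameCycle e₀ y) :
    ∃ x y, σ.SameCycle e₀ x ∧ ¬σ.SameCycle e₀ y ∧ src x = src y := by
  by_contra! hclosed
  have reach : ∀ u, ReflTransGen (HasEdge src tgt) (tgt e₀) u →
      ∃ x, σ.SameCycle e₀ x ∧ src x = u := by
    intro u hu
    induction hu with
    | refl => exact ⟨σ e₀, sameCycle_apply_right.2 SameCycle.rfl, hσ e₀⟩
    | tail _ hstep ih =>
      obtain ⟨x, hx, rfl⟩ := ih
      obtain ⟨e, he, rfl⟩ := hstep
      have hxe : σ.SameCycle e₀ e := by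
        by_contra hne
        exact hclosed x e hx hne he.symm
      exact ⟨σ e, sameCycle_apply_right.2 hxe, hσ e⟩
  obtain ⟨x, hx, hxy⟩ := reach _ (hconn e₀ y)
  exact hclosed x y hx hy hxy

theorem exists_perm_forall_sameCycle [Finite E]
    (hbal : ∀ v, Nat.card {e // src e = v} = Nat.card {e // tgt e = v})
    (hconn : ∀ e e', ReflTransGen (HasEdge src tgt) (tgt e) (src e')) :
    ∃ σ : Perm E, (∀ e, src (σ e) = tgt e) ∧ ∀ x y, σ.SameCycle x y := by
  classical
  rcases isEmpty_or_nonempty E with hE | ⟨⟨e₀⟩⟩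
  · exact ⟨1, fun e => isEmptyElim e, fun x => isEmptyElim x⟩
  obtain ⟨σ, hσ, hmax⟩ := Set.exists_max_image {σ : Perm E | ∀ e, src (σ e) = tgt e}
    (fun σ => {x | σ.SameCycle e₀ x}.ncard) (Set.toFinite _) (exists_perm_src_apply_eq_tgt hbal)
  suffices h : ∀ y, σ.SameCycle e₀ y from ⟨σ, hσ, fun x y => (h x).symm.trans (h y)⟩
  by_contra! ⟨y, hy⟩
  obtain ⟨x, y, hx, hy, hxy⟩ := exists_sameCycle_src_eq_of_not_sameCycle hσ hconn hy
  -- Re-route the two edges entering the common source of `x` and `y`: this merges their cycles.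
  set a := σ.symm x
  set b := σ.symm y
  have ha : σ.SameCycle e₀ a := sameCycle_symm_apply_right.2 hx
  have hab : ¬σ.SameCycle a b := fun h => hy (sameCycle_symm_apply_right.1 (ha.trans h))
  have hτ := src_mul_swap_apply hσ (a := a) (b := b) (by
    rw [← hσ a, ← hσ b]; simpa [a, b] using hxy)
  have hba : (σ * swap a b).SameCycle b a := sameCycle_mul_swap_of_not_sameCycle hab .rfl
  have hay : (σ * swap a b).SameCycle a y := by
    rw [swap_comm]
    exact sameCycle_mul_swap_of_not_sameCycle (fun h => hab h.symm)
      (sameCycle_symm_apply_left.2 SameCycle.rfl)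
  have hlt : {x | σ.SameCycle e₀ x} ⊂ {x | (σ * swap a b).SameCycle e₀ x} := by
    have he₀ : (σ * swap a b).SameCycle e₀ b :=
      (sameCycle_mul_swap_of_not_sameCycle hab ha.symm).symm
    refine Set.ssubset_iff_of_subset (fun z hz => ?_) |>.2 ⟨y, he₀.trans (hba.trans hay), hy⟩
    exact he₀.trans (sameCycle_mul_swap_of_not_sameCycle hab (ha.symm.trans hz))
  exact (Set.ncard_lt_ncard hlt).not_ge (hmax _ hτ)

end Euler

abbrev AdjHopWord (k n : ℕ) : Type := {w : Fin n → Fin k // IsAdjHop k n w}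

section Words

variable {k m : ℕ}

theorem isAdjHop_succ_iff {w : Fin (m + 1) → Fin k} :
    IsAdjHop k (m + 1) w ↔ ∀ i : Fin m, w i.castSucc ≠ w i.succ :=
  ⟨fun h i => h i (by omega), fun h i hi => h ⟨i, by omega⟩⟩

theorem isAdjHop_snoc_iff {v : Fin (m + 1) → Fin k} {c : Fin k} :
    IsAdjHop k (m + 2) (Fin.snoc v c : Fin (m + 2) → Fin k) ↔
      IsAdjHop k (m + 1) v ∧ v (Fin.last m) ≠ c := by
  rw [isAdjHop_succ_iff, isAdjHop_succ_iff, Fin.forall_fin_succ']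
  simp [-Fin.castSucc_succ, Fin.succ_castSucc]

theorem isAdjHop_cons_iff {v : Fin (m + 1) → Fin k} {c : Fin k} :
    IsAdjHop k (m + 2) (Fin.cons c v : Fin (m + 2) → Fin k) ↔
      c ≠ v 0 ∧ IsAdjHop k (m + 1) v := by
  rw [isAdjHop_succ_iff, isAdjHop_succ_iff, Fin.forall_fin_succ]
  simp

theorem IsAdjHop.init {w : Fin (m + 2) → Fin k} (hw : IsAdjHop k (m + 2) w) :
    IsAdjHop k (m + 1) (Fin.init w) :=
  (isAdjHop_snoc_iff.1 (by rwa [Fin.snoc_init_self])).1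

theorem IsAdjHop.tail {w : Fin (m + 2) → Fin k} (hw : IsAdjHop k (m + 2) w) :
    IsAdjHop k (m + 1) (Fin.tail w) :=
  (isAdjHop_cons_iff.1 (by rwa [Fin.cons_self_tail])).2

def initFiberEquiv {α : Type*} (P : (Fin (m + 1) → α) → Prop) (v : Fin m → α) :
    {w : {w // P w} // Fin.init w.1 = v} ≃ {c // P (Fin.snoc v c)} where
  toFun w := ⟨w.1.1 (Fin.last m), by obtain ⟨⟨w, hw⟩, rfl⟩ := w; rwa [Fin.snoc_init_self]⟩
  invFun c := ⟨⟨Fin.snoc v c, c.2⟩, Fin.init_snoc _ _⟩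
  left_inv := fun ⟨⟨w, _⟩, hw⟩ => by subst hw; simp [Fin.snoc_init_self]
  right_inv c := by simp

def tailFiberEquiv {α : Type*} (P : (Fin (m + 1) → α) → Prop) (v : Fin m → α) :
    {w : {w // P w} // Fin.tail w.1 = v} ≃ {c // P (Fin.cons c v)} where
  toFun w := ⟨w.1.1 0, by obtain ⟨⟨w, hw⟩, rfl⟩ := w; rwa [Fin.cons_self_tail]⟩
  invFun c := ⟨⟨Fin.cons c v, c.2⟩, Fin.tail_cons _ _⟩
  left_inv := fun ⟨⟨w, _⟩, hw⟩ => by subst hw; simp [Fin.cons_self_tail]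
  right_inv c := by simp

theorem card_init_fiber_eq_card_tail_fiber (v : Fin (m + 1) → Fin k) :
    Nat.card {e : AdjHopWord k (m + 2) // Fin.init e.1 = v} =
      Nat.card {e : AdjHopWord k (m + 2) // Fin.tail e.1 = v} := by
  rw [Nat.card_congr (initFiberEquiv _ v), Nat.card_congr (tailFiberEquiv _ v)]
  simp only [isAdjHop_snoc_iff, isAdjHop_cons_iff]
  exact Nat.card_congr <| (swap (v (Fin.last m)) (v 0)).subtypeEquiv fun c => by
    simp only [ne_eq, swap_apply_eq_iff, swap_apply_right]
    tauto

def adjHopWordSnocEquiv :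
    AdjHopWord k (m + 2) ≃ Σ v : AdjHopWord k (m + 1), {c : Fin k // v.1 (Fin.last m) ≠ c} where
  toFun w := ⟨⟨Fin.init w.1, w.2.init⟩, w.1 (Fin.last _),
    (isAdjHop_snoc_iff.1 (by rw [Fin.snoc_init_self]; exact w.2)).2⟩
  invFun p := ⟨Fin.snoc p.1.1 p.2.1, isAdjHop_snoc_iff.2 ⟨p.1.2, p.2.2⟩⟩
  left_inv w := Subtype.ext (Fin.snoc_init_self _)
  right_inv p := Sigma.subtype_ext (Subtype.ext (Fin.init_snoc (α := fun _ => Fin k) _ _))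
    (Fin.snoc_last (α := fun _ => Fin k) _ _)

end Words

theorem card_adjHopWord (k m : ℕ) : Nat.card (AdjHopWord k (m + 1)) = k * (k - 1) ^ m := by
  induction m with
  | zero =>
    rw [pow_zero, mul_one]
    refine Eq.trans (Nat.card_congr (β := Fin k) ?_) (Nat.card_fin k)
    exact ⟨fun w => w.1 0, fun c => ⟨fun _ => c, fun _ h => by omega⟩,
      fun w => Subtype.ext (funext fun j => by rw [Fin.fin_one_eq_zero j]), fun _ => rfl⟩
  | succ m ih =>
    have hfib (v : AdjHopWord k (m + 1)) : {c : Fin k // v.1 (Fin.last m) ≠ c} ≃ Fin (k - 1) :=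
      Finite.equivFinOfCardEq (by simp [ne_comm])
    rw [Nat.card_congr (adjHopWordSnocEquiv.trans (sigmaEquivProdOfEquiv hfib)), Nat.card_prod,
      ih, Nat.card_fin, pow_succ, mul_assoc]

section Connectivity

variable {k m : ℕ}

theorem reflTransGen_window (z : ℕ → Fin k) {T : ℕ}
    (hz : ∀ i, i + 1 < T + m + 1 → z i ≠ z (i + 1)) :
    ReflTransGen
      (HasEdge (fun e : AdjHopWord k (m + 2) => Fin.init e.1) (fun e => Fin.tail e.1))
      (fun j : Fin (m + 1) => z j) (fun j => z (T + j)) := by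
  induction T with
  | zero => simpa using ReflTransGen.refl
  | succ T ih =>
    refine (ih fun i hi => hz i (by omega)).tail ⟨⟨fun j => z (T + j), fun i hi => ?_⟩, rfl, ?_⟩
    · exact hz (T + i) (by omega)
    · funext j
      simp only [Fin.tail, Fin.val_succ]
      congr 1
      omega

theorem reflTransGen_of_last_ne {u v : Fin (m + 1) → Fin k} (hu : IsAdjHop k (m + 1) u)
    (hv : IsAdjHop k (m + 1) v) (huv : u (Fin.last m) ≠ v 0) :
    ReflTransGen
      (HasEdge (fun e : AdjHopWord k (m + 2) => Fin.init e.1) (fun e => Fin.tail e.1))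
      u v := by
  -- `u` followed by `v`; the `min` only keeps the index in range and is never active below.
  let z : ℕ → Fin k := fun i =>
    if h : i < m + 1 then u ⟨i, h⟩ else v ⟨min (i - (m + 1)) m, by omega⟩
  have hz : ∀ i, i + 1 < (m + 1) + m + 1 → z i ≠ z (i + 1) := by
    intro i hi
    simp only [z]
    by_cases h₁ : i + 1 < m + 1
    · rw [dif_pos (by omega), dif_pos h₁]
      exact hu i h₁
    by_cases h₂ : i + 1 = m + 1
    · rw [dif_pos (by omega), dif_neg h₁]
      convert huv using 2 <;> ext <;> simp <;> omega
    · rw [dif_neg (by omega), dif_neg h₁]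
      convert hv (i - (m + 1)) (by omega) using 2 <;> ext <;> simp <;> omega
  convert reflTransGen_window z hz using 1 <;> funext j
  · simp only [z, dif_pos j.is_lt]
  · simp only [z, dif_neg (by omega : ¬(m + 1 + j < m + 1))]
    congr
    ext
    simp
    omega

theorem reflTransGen_adjHop (hk : 2 ≤ k) {u v : Fin (m + 1) → Fin k}
    (hu : IsAdjHop k (m + 1) u) (hv : IsAdjHop k (m + 1) v) :
    ReflTransGen
      (HasEdge (fun e : AdjHopWord k (m + 2) => Fin.init e.1) (fun e => Fin.tail e.1))
      u v := by
  by_cases huv : u (Fin.last m) = v 0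
  · -- Detour through one extra letter `c` so that the junction with `v` becomes legal.
    obtain ⟨c, hc⟩ : ∃ c : Fin k, u (Fin.last m) ≠ c := by
      by_contra! h
      have := (h ⟨0, by omega⟩).symm.trans (h ⟨1, by omega⟩)
      simp [Fin.ext_iff] at this
    have he : IsAdjHop k (m + 2) (Fin.snoc u c) := isAdjHop_snoc_iff.2 ⟨hu, hc⟩
    refine .head ⟨⟨_, he⟩, Fin.init_snoc _ _, rfl⟩ (reflTransGen_of_last_ne he.tail hv ?_)
    simpa [Fin.tail, ← huv] using hc.symm
  · exact reflTransGen_of_last_ne hu hv huv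

end Connectivity

theorem isAHDB_of_zmodEquiv {k m L : ℕ} (f : ZMod L ≃ AdjHopWord k (m + 2))
    (hf : ∀ i, Fin.init (f (i + 1)).1 = Fin.tail (f i).1) :
    IsAHDB k (m + 2) L fun i => (f i).1 0 := by
  have hwindow : ∀ (j : ℕ) (hj : j < m + 2) i, (f (i + j)).1 0 = (f i).1 ⟨j, hj⟩ := by
    intro j
    induction j with
    | zero => simp
    | succ j ih =>
      intro hj i
      rw [Nat.cast_succ, add_comm (j : ZMod L), ← add_assoc, ih (by omega)]
      exact congrFun (hf i) ⟨j, by omega⟩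
  refine ⟨fun i => ?_, fun w hw => ?_⟩
  · have h₁ := hwindow 1 (by omega) i
    rw [Nat.cast_one] at h₁
    dsimp only
    rw [h₁]
    exact (f i).2 0 (by omega)
  · refine (existsUnique_congr fun i => ?_).2 (f.bijective.existsUnique ⟨w, hw⟩)
    rw [Subtype.ext_iff, funext_iff]
    exact forall_congr' fun j => by dsimp only; rw [hwindow j j.2]

/-- For all `k ≥ 2`, `n ≥ 2` there exists an adjacency-hopping
de Bruijn sequence `H(k,n)` of length `k * (k-1)^(n-1)`. -/
theorem stmt_6 (k n : ℕ) (hk : 2 ≤ k) (hn : 2 ≤ n) :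
    ∃ s : ZMod (k * (k - 1) ^ (n - 1)) → Fin k,
      IsAHDB k n (k * (k - 1) ^ (n - 1)) s := by
  obtain ⟨m, rfl⟩ : ∃ m, n = m + 2 := ⟨n - 2, by omega⟩
  obtain ⟨σ, hσ, hcycle⟩ := exists_perm_forall_sameCycle
    (src := fun e : AdjHopWord k (m + 2) => Fin.init e.1) (tgt := fun e => Fin.tail e.1)
    card_init_fiber_eq_card_tail_fiber fun e e' => reflTransGen_adjHop hk e.2.tail e'.2.init
  have : Nonempty (AdjHopWord k (m + 2)) := (Nat.card_pos_iff.1 <| by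
    rw [card_adjHopWord k (m + 1)]
    exact Nat.mul_pos (by omega) (Nat.pow_pos (by omega))).1
  obtain ⟨L, f, hf⟩ := Perm.exists_zmod_equiv_of_forall_sameCycle hcycle (Classical.arbitrary _)
  obtain rfl : L = k * (k - 1) ^ (m + 2 - 1) := by
    rw [← Nat.card_zmod L, Nat.card_congr f, card_adjHopWord k (m + 1)]
    rfl
  exact ⟨_, isAHDB_of_zmodEquiv f fun i => by rw [hf, hσ]⟩
end

section
/- Let k ≥ 2 and n ≥ 2, let A be the directed adjacency matrix of the corresponding graph G_k^n, and set ℓ = k·(k-1)^(n-2). Then the characteristic polynomial of A over ℚ equals (X - (k-1)) · (X + 1)^(k-1) · X^(ℓ - k); equivalently, the eigenvalues of A are k-1 with multiplicity 1, -1 with multiplicity k-1, and 0 with multiplicity ℓ - k. -/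
/-- The vertex set of the corresponding graph `G_k^n`: all adjacency-hopping words of
length `n - 1` over `Fin k`. -/
abbrev Vtx (k n : ℕ) : Type := {w : Fin (n - 1) → Fin k // IsAdjHop k (n - 1) w}

/-- The edge relation of `G_k^n`: there is an edge from `u` to `v` iff `v j = u (j+1)`
for all `j` with `j + 1 ≤ n - 2`, and the last letter of `u` differs from the last
letter of `v`. -/
def Edge (k n : ℕ) (u v : Vtx k n) : Prop :=
  (∀ j : ℕ, (h : j + 1 ≤ n - 2) → v.1 ⟨j, by omega⟩ = u.1 ⟨j + 1, by omega⟩) ∧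
  ∀ h : n - 2 < n - 1, u.1 ⟨n - 2, h⟩ ≠ v.1 ⟨n - 2, h⟩

noncomputable instance (k n : ℕ) : Fintype (Vtx k n) := Fintype.ofFinite _

open Classical in
/-- The directed adjacency matrix of `G_k^n` over `ℚ`. -/
noncomputable def AdjMat (k n : ℕ) : Matrix (Vtx k n) (Vtx k n) ℚ :=
  Matrix.of fun u v => if Edge k n u v then 1 else 0

open Polynomial Matrix Function

theorem isAdjHop_init {k m : ℕ} {w : Fin (m + 1) → Fin k} (h : IsAdjHop k (m + 1) w) :
    IsAdjHop k m (Fin.init w) := fun i hi => h i (by omega)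

theorem isAdjHop_tail {k m : ℕ} {w : Fin (m + 1) → Fin k} (h : IsAdjHop k (m + 1) w) :
    IsAdjHop k m (Fin.tail w) := fun i hi => h (i + 1) (by omega)

theorem isAdjHop_snoc {k m : ℕ} {w : Fin (m + 1) → Fin k} (h : IsAdjHop k (m + 1) w)
    {x : Fin k} (hx : x ≠ w (Fin.last m)) : IsAdjHop k (m + 2) (Fin.snoc w x) := by
  intro i hi
  obtain hi' | rfl : i + 1 < m + 1 ∨ i = m := by omega
  · simpa [Fin.snoc, hi', show i < m + 1 by omega] using h i hi'
  · simpa [Fin.snoc, Fin.last] using hx.symm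

theorem last_ne_of_isAdjHop {k m : ℕ} {w : Fin (m + 2) → Fin k} (h : IsAdjHop k (m + 2) w) :
    w (Fin.last (m + 1)) ≠ w (Fin.last m).castSucc := fun e => h m (by omega) e.symm

namespace Vtx

variable {k m : ℕ}

def init (w : Vtx k (m + 3)) : Vtx k (m + 2) := ⟨Fin.init w.1, isAdjHop_init w.2⟩

def tail (w : Vtx k (m + 3)) : Vtx k (m + 2) := ⟨Fin.tail w.1, isAdjHop_tail w.2⟩

def snoc (u : Vtx k (m + 2)) (x : Fin k) (hx : x ≠ u.1 (Fin.last m)) : Vtx k (m + 3) :=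
  ⟨Fin.snoc u.1 x, isAdjHop_snoc u.2 hx⟩

@[simp]
theorem init_snoc (u : Vtx k (m + 2)) (x : Fin k) (hx : x ≠ u.1 (Fin.last m)) :
    (u.snoc x hx).init = u :=
  Subtype.ext (Fin.init_snoc (n := m + 1) (α := fun _ => Fin k) x u.1)

@[simp]
theorem snoc_last (u : Vtx k (m + 2)) (x : Fin k) (hx : x ≠ u.1 (Fin.last m)) :
    (u.snoc x hx).1 (Fin.last (m + 1)) = x :=
  Fin.snoc_last (n := m + 1) (α := fun _ => Fin k) x u.1

theorem init_tail_injective : Injective fun w : Vtx k (m + 3) => (w.init, w.tail) := by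
  intro w w' h
  simp only [Prod.mk.injEq, Subtype.ext_iff] at h
  refine Subtype.ext (funext fun i => Fin.lastCases ?_ (fun i => ?_) i)
  · exact congrFun h.2 (Fin.last m)
  · exact congrFun h.1 i

def snocEquiv :
    (Σ u : Vtx k (m + 2), {x : Fin k // x ≠ u.1 (Fin.last m)}) ≃ Vtx k (m + 3) where
  toFun p := snoc p.1 p.2.1 p.2.2
  invFun w := ⟨w.init, w.1 (Fin.last _), last_ne_of_isAdjHop w.2⟩
  left_inv := fun ⟨u, x, hx⟩ => Sigma.subtype_ext (init_snoc u x hx) (snoc_last u x hx)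
  right_inv w := Subtype.ext (Fin.snoc_init_self w.1)

end Vtx

section

variable {k m : ℕ}

theorem edge_iff {u v : Vtx k (m + 2)} :
    Edge k (m + 2) u v ↔ Fin.tail u.1 = Fin.init v.1 ∧ u.1 (Fin.last m) ≠ v.1 (Fin.last m) := by
  simp only [Edge, funext_iff, Fin.forall_iff]
  exact ⟨fun ⟨h1, h2⟩ => ⟨fun i hi => (h1 i (by omega)).symm, h2 (by omega)⟩,
    fun ⟨h1, h2⟩ => ⟨fun j hj => (h1 j (by omega)).symm, fun _ => h2⟩⟩

theorem edge_succ_iff {u v : Vtx k (m + 3)} : Edge k (m + 3) u v ↔ u.tail = v.init := by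
  rw [edge_iff, Subtype.ext_iff]
  refine ⟨And.left, fun h => ⟨h, fun e => last_ne_of_isAdjHop v.2 ?_⟩⟩
  exact e.symm.trans (congrFun h (Fin.last m))

theorem edge_iff_exists {u v : Vtx k (m + 2)} :
    Edge k (m + 2) u v ↔ ∃ w : Vtx k (m + 3), w.init = u ∧ w.tail = v := by
  rw [edge_iff]
  constructor
  · rintro ⟨h, hlast⟩
    refine ⟨Vtx.snoc u (v.1 (Fin.last m)) hlast.symm, Vtx.init_snoc .., ?_⟩
    refine Subtype.ext (funext fun i => Fin.lastCases ?_ (fun i => ?_) i)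
    · exact Vtx.snoc_last u _ hlast.symm
    · show Fin.snoc (α := fun _ => Fin k) u.1 _ i.castSucc.succ = v.1 i.castSucc
      rw [Fin.succ_castSucc, Fin.snoc_castSucc]
      exact congrFun h i
  · rintro ⟨w, rfl, rfl⟩
    exact ⟨Fin.tail_init_eq_init_tail w.1, (last_ne_of_isAdjHop w.2).symm⟩

theorem card_vtx_two : Fintype.card (Vtx k 2) = k := by
  rw [Fintype.card_eq_nat_card,
    Nat.card_congr (Equiv.subtypeUnivEquiv (p := IsAdjHop k 1) fun w i hi => absurd hi (by omega))]
  simp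

theorem card_vtx_succ : Fintype.card (Vtx k (m + 3)) = Fintype.card (Vtx k (m + 2)) * (k - 1) := by
  rw [← Fintype.card_congr Vtx.snocEquiv, Fintype.card_sigma]
  simp [Fintype.card_subtype_compl]

theorem card_vtx_le_succ (hk : 2 ≤ k) :
    Fintype.card (Vtx k (m + 2)) ≤ Fintype.card (Vtx k (m + 3)) := by
  rw [card_vtx_succ]
  exact Nat.le_mul_of_pos_right _ (by omega)

theorem card_vtx (k m : ℕ) : Fintype.card (Vtx k (m + 2)) = k * (k - 1) ^ m := by
  induction m with
  | zero => simpa using card_vtx_two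
  | succ m ih => rw [card_vtx_succ, ih, pow_succ, mul_assoc]

end

section LineDigraph

variable (R : Type*) {V E : Type*} [CommRing R] [DecidableEq V]

def incidence (f : E → V) : Matrix V E R := of fun v e => if f e = v then 1 else 0

theorem incidence_transpose_mul_incidence [Fintype V] (s t : E → V) :
    (incidence R t)ᵀ * incidence R s = of fun e e' => if t e = s e' then 1 else 0 := by
  ext e e'
  simp [incidence, mul_apply]

variable [Fintype E]

theorem incidence_mul_incidence_transpose {s t : E → V} (hst : Injective fun e => (s e, t e)) :
    incidence R s * (incidence R t)ᵀ = of fun u v => if ∃ e, s e = u ∧ t e = v then 1 else 0 := by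
  ext u v
  simp only [incidence, mul_apply, transpose_apply, of_apply, ← ite_and, mul_boole]
  split_ifs with h
  · obtain ⟨e, rfl, rfl⟩ := h
    rw [Finset.sum_eq_single e (fun e' _ he' => if_neg fun h => he' (hst (Prod.ext h.2 h.1)))
      (by simp)]
    simp
  · exact Finset.sum_eq_zero fun e _ => if_neg fun h' => h ⟨e, h'.2, h'.1⟩

/-- For the digraph on `V` with edge set `E`, source map `s` and target map `t`, the matrix on the
left is the adjacency matrix of its line digraph and the one on the right its own. -/
theorem charpoly_lineDigraph [Fintype V] [DecidableEq E] {s t : E → V}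
    (hst : Injective fun e => (s e, t e)) (hVE : Fintype.card V ≤ Fintype.card E) :
    (of fun e e' => if t e = s e' then 1 else 0 : Matrix E E R).charpoly =
      X ^ (Fintype.card E - Fintype.card V) *
        (of fun u v => if ∃ e, s e = u ∧ t e = v then 1 else 0 : Matrix V V R).charpoly := by
  rw [← incidence_transpose_mul_incidence, ← incidence_mul_incidence_transpose R hst,
    charpoly_mul_comm_of_le _ _ hVE]

end LineDigraph

theorem charpoly_adjMatrix_completeGraph {R ι : Type*} [CommRing R] [Fintype ι] [DecidableEq ι]
    [Nonempty ι] :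
    ((SimpleGraph.completeGraph ι).adjMatrix R).charpoly =
      (X - C ((Fintype.card ι : R) - 1)) * (X + 1) ^ (Fintype.card ι - 1) := by
  obtain ⟨c, hc⟩ : ∃ c, Fintype.card ι = c + 1 := Nat.exists_eq_succ_of_ne_zero Fintype.card_ne_zero
  have hJ : (of 1 : Matrix ι ι R) = vecMulVec 1 1 := by ext; simp [vecMulVec]
  rw [SimpleGraph.adjMatrix_completeGraph_eq_of_one_sub_one, hJ, ← map_one (scalar ι),
    charpoly_sub_scalar, charpoly_vecMulVec, hc]
  simp only [pow_succ, one_dotProduct_one, hc, Nat.cast_add, Nat.cast_one, add_tsub_cancel_right,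
    smul_eq_C_mul, map_add, map_natCast, map_one, sub_comp, mul_comp, pow_comp, X_comp, add_comp,
    natCast_comp, one_comp, add_sub_cancel_right]
  ring

section Adjacency

variable {k m : ℕ}

theorem adjMat_eq_of_iff {n : ℕ} {P : Vtx k n → Vtx k n → Prop} [DecidableRel P]
    (h : ∀ u v, Edge k n u v ↔ P u v) : AdjMat k n = of fun u v => if P u v then 1 else 0 := by
  ext u v
  simp [AdjMat, h]

theorem adjMat_two : AdjMat k 2 = (SimpleGraph.completeGraph (Vtx k 2)).adjMatrix ℚ := by
  refine adjMat_eq_of_iff fun u v => ?_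
  simp [edge_iff (m := 0), Subsingleton.elim (Fin.tail u.1) (Fin.init v.1), Subtype.ext_iff,
    funext_iff, Fin.forall_fin_one]

theorem adjMat_succ : AdjMat k (m + 3) = of fun w w' => if w.tail = w'.init then 1 else 0 :=
  adjMat_eq_of_iff fun _ _ => edge_succ_iff

theorem adjMat_eq_exists :
    AdjMat k (m + 2) = of fun u v => if ∃ w : Vtx k (m + 3), w.init = u ∧ w.tail = v then 1 else 0 :=
  adjMat_eq_of_iff fun _ _ => edge_iff_exists

theorem charpoly_adjMat_succ (hk : 2 ≤ k) :
    (AdjMat k (m + 3)).charpoly =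
      X ^ (Fintype.card (Vtx k (m + 3)) - Fintype.card (Vtx k (m + 2))) *
        (AdjMat k (m + 2)).charpoly := by
  rw [adjMat_succ, adjMat_eq_exists]
  exact charpoly_lineDigraph ℚ Vtx.init_tail_injective (card_vtx_le_succ hk)

theorem charpoly_adjMat (hk : 2 ≤ k) (m : ℕ) :
    (AdjMat k (m + 2)).charpoly =
      (X - C ((k : ℚ) - 1)) * (X + 1) ^ (k - 1) * X ^ (k * (k - 1) ^ m - k) := by
  induction m with
  | zero =>
    have : Nonempty (Vtx k 2) := Fintype.card_pos_iff.mp (by rw [card_vtx_two]; omega)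
    rw [adjMat_two, charpoly_adjMatrix_completeGraph, card_vtx_two]
    simp
  | succ m ih =>
    have hk' : k ≤ k * (k - 1) ^ m := Nat.le_mul_of_pos_right k (Nat.pow_pos (by omega))
    have hle := card_vtx_le_succ (m := m) hk
    rw [card_vtx, card_vtx] at hle
    rw [charpoly_adjMat_succ hk, ih, card_vtx, card_vtx, mul_left_comm, ← pow_add,
      Nat.sub_add_sub_cancel hle hk']

end Adjacency

open Polynomial in
/-- The characteristic polynomial of the adjacency matrix of `G_k^n`
is `(X - (k-1)) * (X + 1)^(k-1) * X^(ℓ - k)` with `ℓ = k * (k-1)^(n-2)`. -/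
theorem stmt_9 (k n : ℕ) (hk : 2 ≤ k) (hn : 2 ≤ n) :
    (AdjMat k n).charpoly =
      (X - C ((k : ℚ) - 1)) * (X + C 1) ^ (k - 1) *
        X ^ (k * (k - 1) ^ (n - 2) - k) := by
  obtain ⟨m, rfl⟩ : ∃ m, n = m + 2 := ⟨n - 2, by omega⟩
  rw [map_one, Nat.add_sub_cancel]
  exact charpoly_adjMat hk m
end
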